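/- Let V be a finite set of vertices and i, t : E → V maps with the property that A(a,b) = 1 implies t(a) = i(b). Let s ∈ (0,1), let I : E_A^∞ → ℝ be Hölder continuous with I(ω) ≥ −log s for all ω, and let J : E_A^∞ → ℝ^d be bounded and Hölder continuous. Assume E_A^∞ is nonempty and finitely irreducible, and let v ∈ V be a vertex such that there exists ω ∈ E_A^∞ with i(ω_1) = v. Then {α ∈ ℝ^d : there exists ω ∈ E_A^∞ with i(ω_1) = v and lim_{n→∞} S_nJ(ω)/S_nI(ω) = α} = K, where K := {α ∈ ℝ^d : there exists ω ∈ E_A^∞ with lim_{n→∞} S_nJ(ω)/S_nI(ω) = α}. -/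

import Mathlib

open MeasureTheory Filter Topology
open scoped ENNReal

/-- The one-sided subshift `E_A^∞` over the alphabet `E` with incidence matrix `A`. -/
abbrev Subshift (E : Type*) (A : E → E → Bool) : Type _ :=
  {ω : ℕ → E // ∀ i : ℕ, A (ω i) (ω (i + 1)) = true}

/-- The left shift map `σ` on `E_A^∞`. -/
def shiftMap {E : Type*} {A : E → E → Bool} (ω : Subshift E A) : Subshift E A :=
  ⟨fun i => ω.1 (i + 1), fun i => ω.2 (i + 1)⟩

/-- The `n`-th Birkhoff sum `S_n f = ∑_{k=0}^{n-1} f ∘ σ^k`. -/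
noncomputable def birkSum {E : Type*} {A : E → E → Bool} {X : Type*} [AddCommMonoid X]
    (f : Subshift E A → X) (n : ℕ) (ω : Subshift E A) : X :=
  ∑ k ∈ Finset.range n, f (shiftMap^[k] ω)

/-- `f` is Hölder continuous with exponent `a > 0`:
`sup_{n ≥ 1} sup { ‖f ω - f τ‖ e^{a(n-1)} : ω, τ agree in their first n coordinates } < ∞`. -/
def IsHolder {E : Type*} {A : E → E → Bool} {X : Type*} [SeminormedAddGroup X]
    (f : Subshift E A → X) (a : ℝ) : Prop :=
  ∃ v : ℝ, ∀ n : ℕ, 1 ≤ n → ∀ ω τ : Subshift E A,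
    (∀ i < n, ω.1 i = τ.1 i) → ‖f ω - f τ‖ * Real.exp (a * ((n : ℝ) - 1)) ≤ v

/-- `E_A^∞` is finitely irreducible: there is a finite set `W` of admissible words such that
any two letters can be joined by a word from `W`. -/
def FinitelyIrreducible {E : Type*} (A : E → E → Bool) : Prop :=
  ∃ W : Finset (List E), ∀ a b : E,
    ∃ w ∈ W, List.Chain' (fun x y => A x y = true) (a :: (w ++ [b]))

/-!
Prepending to a point `ω` a word that joins a letter of initial vertex `v` to `ω₀` (finite
irreducibility) gives a point `ω'` with `i(ω'₀) = v` and `σᵐ ω' = ω`. Then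
`S_{m+n} f ω' = S_m f ω' + S_n f ω`, and since `S_n I ω ≥ -n log s → ∞` the fixed offsets
`S_m I ω'`, `S_m J ω'` do not change the limit of `S_n J / S_n I`.
-/

lemma tendsto_inv_smul_add_of_tendsto {ι F : Type*} [AddCommGroup F] [TopologicalSpace F]
    [Module ℝ F] [ContinuousAdd F] [ContinuousSMul ℝ F] {l : Filter ι} {u : ι → ℝ} {x : ι → F}
    {α : F} (hu : Tendsto u l atTop) (h : Tendsto (fun n => (u n)⁻¹ • x n) l (𝓝 α))
    (c : ℝ) (y : F) : Tendsto (fun n => (c + u n)⁻¹ • (y + x n)) l (𝓝 α) := by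
  have hinv : Tendsto (fun n => (c + u n)⁻¹) l (𝓝 0) :=
    (tendsto_atTop_add_const_left l c hu).inv_tendsto_atTop
  have hratio : Tendsto (fun n => (c + u n)⁻¹ * u n) l (𝓝 1) := by
    have hsub : Tendsto (fun n => 1 - c * (c + u n)⁻¹) l (𝓝 1) := by
      simpa using tendsto_const_nhds.sub (hinv.const_mul c)
    refine hsub.congr' ?_
    filter_upwards [(tendsto_atTop_add_const_left l c hu).eventually_ne_atTop 0] with n hn
    field_simp
    ring
  have hsplit : ∀ᶠ n in l, (c + u n)⁻¹ • y + ((c + u n)⁻¹ * u n) • ((u n)⁻¹ • x n) =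
      (c + u n)⁻¹ • (y + x n) := by
    filter_upwards [hu.eventually_ne_atTop 0] with n hn
    rw [smul_smul, mul_assoc, mul_inv_cancel₀ hn, mul_one, smul_add]
  simpa using ((hinv.smul_const y).add (hratio.smul h)).congr' hsplit

section Subshift

variable {E : Type*} {A : E → E → Bool}

def Subshift.cons (a : E) (ω : Subshift E A) (h : A a (ω.1 0) = true) : Subshift E A :=
  ⟨Stream'.cons a ω.1, fun i => by cases i with
    | zero => exact h
    | succ i => exact ω.2 i⟩

lemma exists_shiftMap_iterate_eq_of_isChain (a : E) (w : List E) (ω : Subshift E A)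
    (h : List.IsChain (fun x y => A x y = true) (a :: (w ++ [ω.1 0]))) :
    ∃ ω' : Subshift E A, ω'.1 0 = a ∧ shiftMap^[w.length + 1] ω' = ω := by
  induction w generalizing a with
  | nil =>
    rw [List.nil_append, List.isChain_pair] at h
    exact ⟨.cons a ω h, rfl, rfl⟩
  | cons b w ih =>
    rw [List.cons_append, List.isChain_cons_cons] at h
    obtain ⟨ω', hb, hω'⟩ := ih b h.2
    exact ⟨.cons a ω' (hb ▸ h.1), rfl, hω'⟩

lemma birkSum_add {X : Type*} [AddCommMonoid X] (f : Subshift E A → X) (m k : ℕ)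
    (ω : Subshift E A) :
    birkSum f (m + k) ω = birkSum f m ω + birkSum f k (shiftMap^[m] ω) := by
  rw [birkSum, Finset.sum_range_add]
  congr 1
  exact Finset.sum_congr rfl fun j _ => by rw [add_comm, Function.iterate_add_apply]

lemma tendsto_birkSum_atTop {f : Subshift E A → ℝ} {c : ℝ} (hc : 0 < c) (hf : ∀ ω, c ≤ f ω)
    (ω : Subshift E A) : Tendsto (fun n => birkSum f n ω) atTop atTop := by
  refine tendsto_atTop_mono (fun n => ?_) (tendsto_natCast_atTop_atTop.atTop_mul_const hc)
  simpa [birkSum] using Finset.card_nsmul_le_sum (Finset.range n) (fun k => f (shiftMap^[k] ω)) c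
    fun k _ => hf _

lemma tendsto_birkSum_ratio_of_shiftMap_iterate_eq {X : Type*} [AddCommGroup X]
    [TopologicalSpace X] [Module ℝ X] [ContinuousAdd X] [ContinuousSMul ℝ X]
    {I : Subshift E A → ℝ} {J : Subshift E A → X} {c : ℝ} (hc : 0 < c) (hI : ∀ ω, c ≤ I ω)
    {ω ω' : Subshift E A} {m : ℕ} (hm : shiftMap^[m] ω' = ω) {α : X}
    (h : Tendsto (fun n => (birkSum I n ω)⁻¹ • birkSum J n ω) atTop (𝓝 α)) :
    Tendsto (fun n => (birkSum I n ω')⁻¹ • birkSum J n ω') atTop (𝓝 α) := by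
  rw [← tendsto_add_atTop_iff_nat m]
  refine (tendsto_inv_smul_add_of_tendsto (tendsto_birkSum_atTop hc hI ω) h
    (birkSum I m ω') (birkSum J m ω')).congr fun n => ?_
  rw [add_comm n m, birkSum_add, birkSum_add, hm]

end Subshift

theorem levelValueSet_vertex_eq_K_general {E V : Type*}
    (A : E → E → Bool) (ini : E → V) (d : ℕ)
    (hfi : FinitelyIrreducible A)
    (s : ℝ) (hs : s ∈ Set.Ioo (0 : ℝ) 1)
    (I : Subshift E A → ℝ)
    (hIlb : ∀ ω, -Real.log s ≤ I ω)
    (J : Subshift E A → EuclideanSpace ℝ (Fin d))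
    (v : V) (hv : ∃ ω : Subshift E A, ini (ω.1 0) = v) :
    {α : EuclideanSpace ℝ (Fin d) | ∃ ω : Subshift E A, ini (ω.1 0) = v ∧
        Tendsto (fun n => (birkSum I n ω)⁻¹ • birkSum J n ω) atTop (𝓝 α)} =
      {α : EuclideanSpace ℝ (Fin d) | ∃ ω : Subshift E A,
        Tendsto (fun n => (birkSum I n ω)⁻¹ • birkSum J n ω) atTop (𝓝 α)} := by
  refine Set.Subset.antisymm (fun α ⟨ω, _, hω⟩ => ⟨ω, hω⟩) ?_
  rintro α ⟨ω, hω⟩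
  obtain ⟨τ, rfl⟩ := hv
  obtain ⟨W, hW⟩ := hfi
  obtain ⟨w, -, hw⟩ := hW (τ.1 0) (ω.1 0)
  obtain ⟨ω', hω'τ, hω'ω⟩ := exists_shiftMap_iterate_eq_of_isChain _ w ω hw
  have hc : 0 < -Real.log s := neg_pos.mpr (Real.log_neg hs.1 hs.2)
  exact ⟨ω', congrArg ini hω'τ,
    tendsto_birkSum_ratio_of_shiftMap_iterate_eq hc hIlb hω'ω hω⟩

/-- for any vertex `v` seen by some point of `E_A^∞`, the level-value set
computed with the restriction `i(ω₁) = v` equals the full set `K`. -/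
theorem levelValueSet_vertex_eq_K {E V : Type*} [Countable E] [Finite V]
    (A : E → E → Bool) (ini ter : E → V)
    (hmat : ∀ a b : E, A a b = true → ter a = ini b) (d : ℕ)
    (hne : Nonempty (Subshift E A)) (hfi : FinitelyIrreducible A)
    (s : ℝ) (hs : s ∈ Set.Ioo (0 : ℝ) 1)
    (I : Subshift E A → ℝ) (aI : ℝ) (haI : 0 < aI) (hIhold : IsHolder I aI)
    (hIlb : ∀ ω, -Real.log s ≤ I ω)
    (J : Subshift E A → EuclideanSpace ℝ (Fin d)) (aJ : ℝ) (haJ : 0 < aJ)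
    (hJhold : IsHolder J aJ) (hJbdd : ∃ C : ℝ, ∀ ω, ‖J ω‖ ≤ C)
    (v : V) (hv : ∃ ω : Subshift E A, ini (ω.1 0) = v) :
    {α : EuclideanSpace ℝ (Fin d) | ∃ ω : Subshift E A, ini (ω.1 0) = v ∧
        Tendsto (fun n => (birkSum I n ω)⁻¹ • birkSum J n ω) atTop (𝓝 α)} =
      {α : EuclideanSpace ℝ (Fin d) | ∃ ω : Subshift E A,
        Tendsto (fun n => (birkSum I n ω)⁻¹ • birkSum J n ω) atTop (𝓝 α)} :=
  levelValueSet_vertex_eq_K_general A ini d hfi s hs I hIlb J v hv
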